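/- Let A = (Z_2)^n and B = Z_n, let e_i ∈ A denote the binary string of length n with a 1 in position i and 0 elsewhere (and e_0 the all-zero string), let S_A = {e_1, …, e_n}, let S_B = ±{s_1, …, s_k} ⊆ Z_n with k ≥ 2 and s_1 < s_2 < … < s_k < n/2, let φ : B → Aut(A) be the cyclic-shift action φ_i(a_1a_2…a_n) = a_{1−i}a_{2−i}…a_{n−i (mod n)}, and let G = C_{A⋊_φB}(S) where S = {(e_0, s) : s ∈ S_B} ∪ {(e_1, 0)}. If n/2 < |S_B| < n−1, then G is not λ'-optimal, λ(G) < λ'(G) = n < υ(G)/2 where υ(G) = n·2^n is the order of G, and for every λ'-atom X of G the induced subgraph G[X] is isomorphic to the circulant graph C_B(S_B). -/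

import Mathlib

open SimpleGraph

section Defs

variable {V : Type*}

/-- The set of edges of `G` with one endpoint in `X` and the other outside `X`. -/
def edgeBoundary (G : SimpleGraph V) (X : Set V) : Set (Sym2 V) :=
  {e | e ∈ G.edgeSet ∧ ∃ u ∈ X, ∃ v ∈ Xᶜ, e = s(u, v)}

/-- The edge-connectivity `λ(G)`: the minimum number of edges whose removal disconnects `G`. -/
noncomputable def edgeConn (G : SimpleGraph V) : ℕ :=
  sInf {k | ∃ F : Set (Sym2 V), F ⊆ G.edgeSet ∧ F.ncard = k ∧ ¬(G.deleteEdges F).Connected}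

/-- `F` is a restricted edge-cut of `G`: removing `F` disconnects `G` and leaves no
isolated vertices. -/
def IsRestrictedEdgeCut (G : SimpleGraph V) (F : Set (Sym2 V)) : Prop :=
  F ⊆ G.edgeSet ∧ ¬(G.deleteEdges F).Connected ∧ ∀ v : V, ∃ w : V, (G.deleteEdges F).Adj v w

/-- The restricted edge-connectivity `λ'(G)`. -/
noncomputable def restrictedEdgeConn (G : SimpleGraph V) : ℕ :=
  sInf {k | ∃ F : Set (Sym2 V), IsRestrictedEdgeCut G F ∧ F.ncard = k}

/-- The vertex-connectivity `κ(G)`: the minimum size of a set of vertices whose removal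
leaves a disconnected graph or a graph with at most one vertex. -/
noncomputable def vertexConn (G : SimpleGraph V) : ℕ :=
  sInf {k | ∃ S : Set V, S.ncard = k ∧
    (¬(G.induce (Sᶜ : Set V)).Connected ∨ (Sᶜ : Set V).ncard ≤ 1)}

/-- The minimum edge-degree `ξ(G) = min {d(u) + d(v) - 2 : uv ∈ E(G)}`. -/
noncomputable def minEdgeDegree (G : SimpleGraph V) : ℕ :=
  sInf {k | ∃ u v : V, G.Adj u v ∧ (G.neighborSet u).ncard + (G.neighborSet v).ncard - 2 = k}

/-- `G` is `λ'`-optimal if `λ'(G) = ξ(G)`. -/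
def LambdaPrimeOptimal (G : SimpleGraph V) : Prop :=
  restrictedEdgeConn G = minEdgeDegree G

/-- The replacement product of `G1` and `G2` with respect to an edge-labelling `ℓ`,
where `ℓ x i` is the other endpoint of the edge of `G1` labelled `i` at the vertex `x`.
Vertices `(x, i)` and `(y, j)` are adjacent iff either `x = y` and `i j ∈ E(G2)`, or
`x y ∈ E(G1)` and the edge `x y` is labelled `i` at `x` and `j` at `y`. -/
def replacementProduct {V1 V2 : Type*} (G1 : SimpleGraph V1) (G2 : SimpleGraph V2)
    (ℓ : V1 → V2 → V1) : SimpleGraph (V1 × V2) where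
  Adj p q := (p.1 = q.1 ∧ G2.Adj p.2 q.2) ∨
    (G1.Adj p.1 q.1 ∧ ℓ p.1 p.2 = q.1 ∧ ℓ q.1 q.2 = p.1)
  symm := by
    constructor
    rintro p q (⟨h1, h2⟩ | ⟨h1, h2, h3⟩)
    · exact Or.inl ⟨h1.symm, h2.symm⟩
    · exact Or.inr ⟨h1.symm, h3, h2⟩
  loopless := by
    constructor
    rintro p (⟨_, h⟩ | ⟨h, _⟩)
    · exact G2.loopless.irrefl _ h
    · exact G1.loopless.irrefl _ h

/-- `ℓ` is a valid edge-labelling of `G1` for the replacement product: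
for each vertex `x`, `ℓ x` is injective and `ℓ x i` is always a neighbour of `x`
(hence `ℓ x` enumerates the neighbours of `x` when `G1` is `|V2|`-regular). -/
def IsRPLabelling {V1 V2 : Type*} (G1 : SimpleGraph V1) (ℓ : V1 → V2 → V1) : Prop :=
  (∀ x, Function.Injective (ℓ x)) ∧ ∀ x i, G1.Adj x (ℓ x i)

end Defs

/-- The (undirected) Cayley graph of a group `Γ` with connection set `S`: vertices are the
elements of `Γ`, and distinct `x, y` are adjacent iff `x⁻¹ * y ∈ S` (or symmetrically
`y⁻¹ * x ∈ S`; when `S = S⁻¹` the two conditions agree). -/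
def cayleyGraph {Γ : Type*} [Group Γ] (S : Set Γ) : SimpleGraph Γ where
  Adj x y := x ≠ y ∧ (x⁻¹ * y ∈ S ∨ y⁻¹ * x ∈ S)
  symm := by
    constructor
    rintro x y ⟨h1, h2⟩
    exact ⟨h1.symm, h2.symm⟩
  loopless := by
    constructor
    rintro x ⟨h, -⟩
    exact h rfl

/-- A `λ'`-fragment of `G`: a vertex set `X` with `|X| ≥ 2` whose edge-boundary is a
minimum restricted edge-cut and such that both `G[X]` and `G[complement of X]` are
connected. -/
def IsLambdaPrimeFragment {V : Type*} (G : SimpleGraph V) (X : Set V) : Prop :=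
  2 ≤ X.ncard ∧ IsRestrictedEdgeCut G (edgeBoundary G X) ∧
    (edgeBoundary G X).ncard = restrictedEdgeConn G ∧
    (G.induce X).Connected ∧ (G.induce (Xᶜ : Set V)).Connected

/-- A `λ'`-atom of `G`: a `λ'`-fragment of minimum cardinality. -/
def IsLambdaPrimeAtom {V : Type*} (G : SimpleGraph V) (X : Set V) : Prop :=
  IsLambdaPrimeFragment G X ∧
    ∀ Y : Set V, IsLambdaPrimeFragment G Y → X.ncard ≤ Y.ncard

/-- The binary string of length `n` (indexed by `ZMod n`) with a `1` in position `k` and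
`0` elsewhere. -/
def eVec (n : ℕ) (k : ZMod n) : ZMod n → ZMod 2 := fun j => if j = k then 1 else 0

/-!
Coordinatise the group as pairs `(a, i)` of a binary string `a ∈ Z_2^n` (the *cloud*) and a
level `i ∈ Z_n`. After shifting the strings by one position, `(a, i)` is adjacent to
`(a, i ± s)` for `s ∈ S_B` and to `(a + e_i, i)`: every cloud carries a copy of the circulant
`C_n(S_B)`, and the clouds are joined by a perfect matching running along the edges of the
hypercube `Q_n`. The graph is `(|S_B| + 1)`-regular, so `λ ≤ |S_B| + 1 < n` and
`ξ = 2|S_B| > n`.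

A cloud is cut off by its `n` matching edges, so `λ' ≤ n`. Conversely, let `X` be a vertex set
such that every vertex has a neighbour on its own side. If `X` splits a cloud, the circulant in
it, of degree `|S_B| > n/2`, contributes at least `|S_B|` boundary edges, and the total exceeds
`n`: a second split cloud contributes as many again; if all other clouds lie on one side, the at
least two vertices of the split cloud on the other side lose their matching edges as well; and
otherwise the edge-connectivity `n` of `Q_n`, applied to the clouds inside `X` and to those
outside, supplies the rest. If `X` splits no cloud, its boundary is an edge cut of `Q_n`, of size
at least `n`. Hence `λ' = n`, and a set with boundary `n` and at most `n` vertices is a single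
cloud; so the `λ'`-atoms are the clouds, which induce `C_n(S_B)`.
-/

namespace SimpleGraph

variable {V W : Type*} {G : SimpleGraph V} {H : SimpleGraph W}

def crossingPairs (G : SimpleGraph V) (X : Set V) : Set (V × V) :=
  {p | p.1 ∈ X ∧ p.2 ∉ X ∧ G.Adj p.1 p.2}

def IsRestrictedPart (G : SimpleGraph V) (X : Set V) : Prop :=
  ∀ v, ∃ w, G.Adj v w ∧ (w ∈ X ↔ v ∈ X)

section Cuts

theorem _root_.ncard_edgeBoundary (X : Set V) :
    (edgeBoundary G X).ncard = (G.crossingPairs X).ncard := by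
  have : edgeBoundary G X = (fun p : V × V => s(p.1, p.2)) '' G.crossingPairs X := by
    ext e
    constructor
    · rintro ⟨he, u, hu, v, hv, rfl⟩
      exact ⟨(u, v), ⟨hu, hv, he⟩, rfl⟩
    · rintro ⟨⟨u, v⟩, ⟨hu, hv, huv⟩, rfl⟩
      exact ⟨huv, u, hu, v, hv, rfl⟩
  rw [this, Set.InjOn.ncard_image]
  rintro ⟨u, v⟩ ⟨hu, -, -⟩ ⟨u', v'⟩ ⟨-, hv', -⟩ h
  rcases Sym2.eq_iff.1 h with ⟨rfl, rfl⟩ | ⟨rfl, rfl⟩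
  · rfl
  · exact absurd hu hv'

theorem ncard_crossingPairs_compl (X : Set V) :
    (G.crossingPairs Xᶜ).ncard = (G.crossingPairs X).ncard := by
  have : G.crossingPairs Xᶜ = Prod.swap '' G.crossingPairs X := by
    rw [Set.image_swap_eq_preimage_swap]
    ext ⟨u, v⟩
    exact ⟨fun ⟨hu, hv, h⟩ => ⟨not_not.1 hv, hu, h.symm⟩,
      fun ⟨hv, hu, h⟩ => ⟨hu, not_not.2 hv, h.symm⟩⟩
  rw [this, Set.ncard_image_of_injective _ Prod.swap_injective]

theorem IsRestrictedPart.compl {X : Set V} (h : G.IsRestrictedPart X) :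
    G.IsRestrictedPart Xᶜ := fun v => by
  obtain ⟨w, hvw, hw⟩ := h v
  exact ⟨w, hvw, not_congr hw⟩

theorem mem_of_reachable_deleteEdges_edgeBoundary {X : Set V} {u v : V}
    (h : (G.deleteEdges (edgeBoundary G X)).Reachable u v) (hu : u ∈ X) : v ∈ X := by
  obtain ⟨p⟩ := h
  induction p with
  | nil => exact hu
  | @cons x y _ hxy _ ih =>
    apply ih
    by_contra hy
    rw [deleteEdges_adj] at hxy
    exact hxy.2 ⟨hxy.1, x, hu, y, hy, rfl⟩

theorem _root_.isRestrictedEdgeCut_edgeBoundary {X : Set V} (hX : G.IsRestrictedPart X)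
    (hne : X.Nonempty) (hne' : Xᶜ.Nonempty) : IsRestrictedEdgeCut G (edgeBoundary G X) := by
  refine ⟨fun e he => he.1, fun hconn => ?_, fun v => ?_⟩
  · obtain ⟨u, hu⟩ := hne
    obtain ⟨v, hv⟩ := hne'
    exact hv (mem_of_reachable_deleteEdges_edgeBoundary (hconn.preconnected u v) hu)
  · obtain ⟨w, hvw, hw⟩ := hX v
    refine ⟨w, deleteEdges_adj.2 ⟨hvw, ?_⟩⟩
    rintro ⟨-, x, hx, y, hy, hxy⟩
    rcases Sym2.eq_iff.1 hxy with ⟨rfl, rfl⟩ | ⟨rfl, rfl⟩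
    exacts [hy (hw.2 hx), hy (hw.1 hx)]

theorem _root_.IsRestrictedEdgeCut.isRestrictedPart {X : Set V}
    (h : IsRestrictedEdgeCut G (edgeBoundary G X)) : G.IsRestrictedPart X := fun v => by
  obtain ⟨w, hvw⟩ := h.2.2 v
  rw [deleteEdges_adj] at hvw
  refine ⟨w, hvw.1, ⟨fun hw => ?_, fun hv => ?_⟩⟩ <;> by_contra hc <;> apply hvw.2
  · exact ⟨hvw.1, w, hw, v, hc, Sym2.eq_swap⟩
  · exact ⟨hvw.1, v, hv, w, hc, rfl⟩

theorem _root_.IsRestrictedEdgeCut.exists_isRestrictedPart [Nonempty V] {F : Set (Sym2 V)}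
    (hF : IsRestrictedEdgeCut G F) :
    ∃ X : Set V, X.Nonempty ∧ Xᶜ.Nonempty ∧ G.IsRestrictedPart X ∧ edgeBoundary G X ⊆ F := by
  obtain ⟨-, hdis, hiso⟩ := hF
  obtain ⟨u, v, huv⟩ : ∃ u v, ¬(G.deleteEdges F).Reachable u v := by
    by_contra! h
    exact hdis ⟨h⟩
  refine ⟨{w | (G.deleteEdges F).Reachable u w}, ⟨u, .rfl⟩, ⟨v, huv⟩, fun w => ?_, ?_⟩
  · obtain ⟨w', hww'⟩ := hiso w
    exact ⟨w', (deleteEdges_adj.1 hww').1,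
      fun h => h.trans hww'.symm.reachable, fun h => h.trans hww'.reachable⟩
  · rintro e ⟨he, x, hx, y, hy, rfl⟩
    by_contra heF
    exact hy (hx.trans (deleteEdges_adj.2 ⟨he, heF⟩).reachable)

variable (G) in
theorem _root_.edgeConn_le_ncard_neighborSet {v w : V} (hvw : v ≠ w) :
    edgeConn G ≤ (G.neighborSet v).ncard := by
  classical
  refine Nat.sInf_le ⟨G.incidenceSet v, G.incidenceSet_subset v,
    Nat.card_congr (G.incidenceSetEquivNeighborSet v), fun hconn => ?_⟩
  obtain ⟨p⟩ := hconn.preconnected v w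
  cases p with
  | nil => exact hvw rfl
  | cons h _ =>
    rw [deleteEdges_adj] at h
    exact h.2 (G.mk'_mem_incidenceSet_left_iff.2 h.1)

theorem _root_.minEdgeDegree_eq_of_forall_ncard_neighborSet_eq {d : ℕ}
    (hd : ∀ v, (G.neighborSet v).ncard = d) {u v : V} (huv : G.Adj u v) :
    minEdgeDegree G = 2 * d - 2 := by
  have : {k | ∃ u v, G.Adj u v ∧
      (G.neighborSet u).ncard + (G.neighborSet v).ncard - 2 = k} = {2 * d - 2} := by
    ext k
    simp only [hd, Set.mem_ofPred_eq, Set.mem_singleton_iff]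
    constructor
    · rintro ⟨-, -, -, rfl⟩
      omega
    · rintro rfl
      exact ⟨u, v, huv, by omega⟩
  rw [minEdgeDegree, this, csInf_singleton]

theorem connected_induce_of_forall_exists_adj {Z : Set V} (hZ : Z.Nonempty)
    (h : ∀ Z₁ ⊆ Z, Z₁.Nonempty → (Z \ Z₁).Nonempty → ∃ u ∈ Z₁, ∃ v ∈ Z \ Z₁, G.Adj u v) :
    (G.induce Z).Connected := by
  obtain ⟨z, hz⟩ := hZ
  let R : Set V := {v | ∃ hv : v ∈ Z, (G.induce Z).Reachable ⟨z, hz⟩ ⟨v, hv⟩}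
  have hZR : Z ⊆ R := by
    by_contra hZR
    obtain ⟨v, hv, hvR⟩ := Set.not_subset.1 hZR
    obtain ⟨u, ⟨hu, hzu⟩, w, ⟨hw, hwR⟩, huw⟩ :=
      h R (fun v hv => hv.1) ⟨z, hz, .rfl⟩ ⟨v, hv, hvR⟩
    exact hwR ⟨hw, hzu.trans (Adj.reachable (G := G.induce Z) huw)⟩
  have : Nonempty Z := ⟨⟨z, hz⟩⟩
  refine ⟨fun u v => ?_⟩
  obtain ⟨_, hu⟩ := hZR u.2
  obtain ⟨_, hv⟩ := hZR v.2
  exact hu.symm.trans hv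

end Cuts

section Dense

variable [Finite V] {δ : ℕ}

theorem ncard_mul_le_ncard_crossingPairs (hδ : ∀ v, δ ≤ (G.neighborSet v).ncard) (Y : Set V) :
    Y.ncard * (δ + 1 - Y.ncard) ≤ (G.crossingPairs Y).ncard := by
  classical
  have hfiber : ∀ y ∈ Y, δ + 1 - Y.ncard ≤ (G.neighborSet y \ Y).ncard := by
    intro y hy
    have hsub : G.neighborSet y ⊆ (G.neighborSet y \ Y) ∪ (Y \ {y}) := fun w hw => by
      by_cases hwY : w ∈ Y
      · exact Or.inr ⟨hwY, fun h => G.loopless.irrefl y (h ▸ hw)⟩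
      · exact Or.inl ⟨hw, hwY⟩
    have hle := (Set.ncard_le_ncard hsub).trans (Set.ncard_union_le _ _)
    rw [Set.ncard_sdiff_singleton_of_mem hy] at hle
    have hy1 := (Set.ncard_pos (Set.toFinite Y)).2 ⟨y, hy⟩
    have := hδ y
    omega
  have hunion : G.crossingPairs Y = ⋃ y ∈ Y, Prod.mk y '' (G.neighborSet y \ Y) := by
    ext ⟨u, v⟩
    simp only [crossingPairs, Set.mem_iUnion, Set.mem_image, Prod.mk.injEq, exists_prop]
    constructor
    · rintro ⟨hu, hv, huv⟩
      exact ⟨u, hu, v, ⟨huv, hv⟩, rfl, rfl⟩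
    · rintro ⟨u, hu, v, ⟨huv, hv⟩, rfl, rfl⟩
      exact ⟨hu, hv, huv⟩
  have hdisj : Y.PairwiseDisjoint fun y => Prod.mk y '' (G.neighborSet y \ Y) := by
    intro y _ y' _ hyy'
    simp only [Function.onFun, Set.disjoint_left, Set.mem_image]
    rintro _ ⟨w, -, rfl⟩ ⟨w', -, h⟩
    exact hyy' (congrArg Prod.fst h).symm
  rw [hunion, (Set.toFinite Y).ncard_biUnion (fun _ _ => Set.toFinite _) hdisj,
    finsum_mem_eq_finite_toFinset_sum _ (Set.toFinite Y)]
  calc Y.ncard * (δ + 1 - Y.ncard) = ∑ _y ∈ (Set.toFinite Y).toFinset, (δ + 1 - Y.ncard) := by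
        rw [Finset.sum_const, smul_eq_mul, ← Set.ncard_eq_toFinset_card]
    _ ≤ _ := Finset.sum_le_sum fun y hy => by
        rw [Set.ncard_image_of_injective _ (Prod.mk_right_injective y)]
        exact hfiber y ((Set.Finite.mem_toFinset _).1 hy)

variable (hδ : ∀ v, δ ≤ (G.neighborSet v).ncard) (hV : Nat.card V < 2 * δ)
include hδ hV

theorem le_ncard_crossingPairs_of_dense {Y : Set V} (hY : Y.Nonempty) (hY' : Yᶜ.Nonempty) :
    δ ≤ (G.crossingPairs Y).ncard := by
  have small : ∀ Z : Set V, Z.Nonempty → Z.ncard ≤ δ → δ ≤ (G.crossingPairs Z).ncard := by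
    intro Z hZ hZδ
    have hpos := (Set.ncard_pos (Set.toFinite Z)).2 hZ
    have := ncard_mul_le_ncard_crossingPairs hδ Z
    obtain ⟨u, hu⟩ := Nat.exists_eq_add_of_le hZδ
    rw [hu, show Z.ncard + u + 1 - Z.ncard = u + 1 by omega] at this
    nlinarith
  have := Set.ncard_add_ncard_compl Y
  by_cases hYδ : Y.ncard ≤ δ
  · exact small Y hY hYδ
  · rw [← ncard_crossingPairs_compl]
    exact small Yᶜ hY' (by omega)

theorem two_mul_le_ncard_crossingPairs_add_of_dense {Y : Set V} (hY : 2 ≤ Y.ncard)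
    (hY' : Yᶜ.Nonempty) : 2 * δ ≤ (G.crossingPairs Y).ncard + Y.ncard := by
  by_cases hYδ : Y.ncard ≤ δ
  · have := ncard_mul_le_ncard_crossingPairs hδ Y
    obtain ⟨u, hu⟩ := Nat.exists_eq_add_of_le hYδ
    rw [hu, show Y.ncard + u + 1 - Y.ncard = u + 1 by omega] at this
    nlinarith
  · have := le_ncard_crossingPairs_of_dense hδ hV
      (Set.nonempty_of_ncard_ne_zero (by omega)) hY'
    omega

theorem connected_of_dense [Nonempty V] : G.Connected := by
  refine ⟨fun u v => ?_⟩
  obtain ⟨w, hu, hv⟩ : (G.neighborSet u ∩ G.neighborSet v).Nonempty := by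
    refine Set.nonempty_of_ncard_ne_zero fun h => ?_
    have := Set.ncard_union_add_ncard_inter (G.neighborSet u) (G.neighborSet v)
    have := Set.ncard_le_ncard (Set.subset_univ (G.neighborSet u ∪ G.neighborSet v))
    rw [Set.ncard_univ] at this
    have := hδ u
    have := hδ v
    omega
  exact (Adj.reachable hu).trans (Adj.reachable hv).symm

end Dense

section Iso

variable (f : G ≃g H)
include f

theorem Iso.ncard_neighborSet (v : V) :
    (H.neighborSet (f v)).ncard = (G.neighborSet v).ncard := by
  rw [← f.image_neighborSet, Set.ncard_image_of_injective _ f.injective]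

theorem _root_.IsRestrictedEdgeCut.image {F : Set (Sym2 V)} (hF : IsRestrictedEdgeCut G F) :
    IsRestrictedEdgeCut H (Sym2.map f '' F) := by
  have hmem : ∀ {u v}, s(f u, f v) ∈ Sym2.map f '' F ↔ s(u, v) ∈ F := fun {u v} => by
    rw [← Sym2.map_mk]
    exact (Sym2.map.injective f.injective).mem_set_image
  let f' : G.deleteEdges F ≃g H.deleteEdges (Sym2.map f '' F) :=
    { f.toEquiv with map_rel_iff' := by simp [deleteEdges_adj, hmem, f.map_adj_iff] }
  obtain ⟨hsub, hdis, hiso⟩ := hF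
  refine ⟨?_, fun h => hdis (f'.connected_iff.2 h), fun w => ?_⟩
  · rintro _ ⟨e, he, rfl⟩
    exact f.map_mem_edgeSet_iff.2 (hsub he)
  · obtain ⟨v, hv⟩ := hiso (f.symm w)
    exact ⟨f v, by simpa [f'] using f'.map_adj_iff.2 hv⟩

theorem Iso.restrictedCutSizes_subset :
    {k | ∃ F, IsRestrictedEdgeCut G F ∧ F.ncard = k} ⊆
      {k | ∃ F, IsRestrictedEdgeCut H F ∧ F.ncard = k} := by
  rintro _ ⟨F, hF, rfl⟩
  exact ⟨_, hF.image f, Set.ncard_image_of_injective _ (Sym2.map.injective f.injective)⟩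

theorem _root_.restrictedEdgeConn_congr : restrictedEdgeConn G = restrictedEdgeConn H := by
  rw [restrictedEdgeConn, restrictedEdgeConn,
    f.restrictedCutSizes_subset.antisymm f.symm.restrictedCutSizes_subset]

theorem IsRestrictedPart.image {X : Set V} (hX : G.IsRestrictedPart X) :
    H.IsRestrictedPart (f '' X) := fun w => by
  obtain ⟨v, hv, hvX⟩ := hX (f.symm w)
  refine ⟨f v, by simpa using f.map_adj_iff.2 hv, ?_⟩
  rw [f.injective.mem_set_image, ← f.apply_symm_apply w, f.injective.mem_set_image]
  simpa using hvX

theorem ncard_crossingPairs_image (X : Set V) :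
    (H.crossingPairs (f '' X)).ncard = (G.crossingPairs X).ncard := by
  have : H.crossingPairs (f '' X) = Prod.map f f '' G.crossingPairs X := by
    ext ⟨x, y⟩
    obtain ⟨u, rfl⟩ := f.surjective x
    obtain ⟨v, rfl⟩ := f.surjective y
    simp only [crossingPairs, Set.mem_ofPred_eq, f.injective.mem_set_image, f.map_adj_iff]
    rw [← Prod.map_apply, (f.injective.prodMap f.injective).mem_set_image]
    rfl
  rw [this, Set.ncard_image_of_injective _ (f.injective.prodMap f.injective)]

theorem connected_induce_image {X : Set V} (hX : (G.induce X).Connected) :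
    (H.induce (f '' X)).Connected :=
  (f.induce f.injective.injOn.bijOn_image).connected_iff.1 hX

theorem _root_.IsLambdaPrimeFragment.image {X : Set V} (hX : IsLambdaPrimeFragment G X) :
    IsLambdaPrimeFragment H (f '' X) := by
  obtain ⟨h2, hcut, hcard, hconn, hconn'⟩ := hX
  have hne : X.Nonempty := Set.nonempty_of_ncard_ne_zero (by omega)
  have hne' : Xᶜ.Nonempty := let ⟨⟨v, hv⟩⟩ := hconn'.nonempty; ⟨v, hv⟩
  have hcompl : f '' Xᶜ = (f '' X)ᶜ := Set.image_compl_eq f.bijective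
  refine ⟨by rwa [Set.ncard_image_of_injective _ f.injective], ?_, ?_,
    connected_induce_image f hconn, hcompl ▸ connected_induce_image f hconn'⟩
  · exact isRestrictedEdgeCut_edgeBoundary (hcut.isRestrictedPart.image f) (hne.image f)
      (hcompl ▸ hne'.image f)
  · rw [ncard_edgeBoundary, ncard_crossingPairs_image, ← ncard_edgeBoundary, hcard,
      restrictedEdgeConn_congr f]

theorem _root_.IsLambdaPrimeAtom.image {X : Set V} (hX : IsLambdaPrimeAtom G X) :
    IsLambdaPrimeAtom H (f '' X) := by
  refine ⟨hX.1.image f, fun Y hY => ?_⟩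
  rw [Set.ncard_image_of_injective _ f.injective,
    ← Set.ncard_image_of_injective Y f.symm.injective]
  exact hX.2 _ (hY.image f.symm)

end Iso

end SimpleGraph

section Hypercube

variable {ι : Type*} {P : Set (ι → ZMod 2)}

def subcube (T : Finset ι) (a : ι → ZMod 2) : Set (ι → ZMod 2) :=
  {x | ∀ i ∉ T, x i = a i}

theorem subcube_eq {T : Finset ι} {a b : ι → ZMod 2} (h : b ∈ subcube T a) :
    subcube T b = subcube T a := by
  ext x
  exact forall₂_congr fun i hi => by rw [h i hi]

theorem card_pos_of_mem_subcube {T : Finset ι} {a x y : ι → ZMod 2} (hx : x ∈ subcube T a)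
    (hy : y ∈ subcube T a) (hxy : x ≠ y) : 0 < T.card := by
  rw [Finset.card_pos, Finset.nonempty_iff_ne_empty]
  rintro rfl
  exact hxy (funext fun i =>
    (hx i (Finset.notMem_empty i)).trans (hy i (Finset.notMem_empty i)).symm)

theorem zmod_two_eq_add_one_of_ne : ∀ u v : ZMod 2, u ≠ v → u = v + 1 := by
  decide

variable [DecidableEq ι]

theorem add_single_add_single (x : ι → ZMod 2) (j : ι) :
    x + Pi.single j 1 + Pi.single j 1 = x := by
  rw [add_assoc, ← Pi.single_add, show (1 + 1 : ZMod 2) = 0 from rfl, Pi.single_zero, add_zero]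

theorem add_single_ne (x : ι → ZMod 2) (j : ι) : x + Pi.single j 1 ≠ x := by
  simp

def cubeCrossings (P : Set (ι → ZMod 2)) : Set ((ι → ZMod 2) × ι) :=
  {x | x.1 ∈ P ∧ x.1 + Pi.single x.2 1 ∉ P}

def subcubeCrossings (P : Set (ι → ZMod 2)) (T : Finset ι) (a : ι → ZMod 2) :
    Set ((ι → ZMod 2) × ι) :=
  {x ∈ cubeCrossings P | x.2 ∈ T ∧ x.1 ∈ subcube T a}

theorem subcubeCrossings_eq {T : Finset ι} {a b : ι → ZMod 2} (h : b ∈ subcube T a) :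
    subcubeCrossings P T b = subcubeCrossings P T a := by
  simp only [subcubeCrossings, subcube_eq h]

theorem add_single_mem_subcube {T : Finset ι} {a x : ι → ZMod 2} (j : ι)
    (hx : x ∈ subcube T a) : x + Pi.single j 1 ∈ subcube T (a + Pi.single j 1) :=
  fun i hi => by simp only [Pi.add_apply, hx i hi]

theorem subcube_subset_insert {T : Finset ι} (j : ι) (a : ι → ZMod 2) :
    subcube T a ⊆ subcube (insert j T) a :=
  fun _ hx i hi => hx i fun h => hi (Finset.mem_insert_of_mem h)

theorem subcube_add_single_subset_insert {T : Finset ι} (j : ι) (a : ι → ZMod 2) :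
    subcube T (a + Pi.single j 1) ⊆ subcube (insert j T) a := fun x hx i hi => by
  rw [Finset.mem_insert, not_or] at hi
  simp [subcube_subset_insert j _ hx i (by simp [hi.1, hi.2]), hi.1]

theorem mem_subcube_add_single {T : Finset ι} {j : ι} {a x : ι → ZMod 2}
    (hx : x ∈ subcube (insert j T) a) (hx' : x ∉ subcube T a) :
    x ∈ subcube T (a + Pi.single j 1) := by
  intro i hi
  by_cases hij : i = j
  · subst hij
    have hne : x i ≠ a i := fun h => hx' fun k hk => by
      by_cases hki : k = i
      · rwa [hki]
      · exact hx k (by simp [hki, hk])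
    simpa using zmod_two_eq_add_one_of_ne _ _ hne
  · simp [hx i (by simp [hij, hi]), hij]

variable [Finite ι]

theorem ncard_subcubeCrossings_insert {j : ι} {T : Finset ι} (hj : j ∉ T) (a : ι → ZMod 2) :
    (subcubeCrossings P T a).ncard + (subcubeCrossings P T (a + Pi.single j 1)).ncard +
      {x ∈ subcubeCrossings P (insert j T) a | x.2 = j}.ncard ≤
    (subcubeCrossings P (insert j T) a).ncard := by
  have hsub : ∀ b, subcube T b ⊆ subcube (insert j T) a →
      subcubeCrossings P T b ⊆ subcubeCrossings P (insert j T) a :=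
    fun b hb x ⟨hx, hxT, hxb⟩ => ⟨hx, Finset.mem_insert_of_mem hxT, hb hxb⟩
  have d12 : Disjoint (subcubeCrossings P T a) (subcubeCrossings P T (a + Pi.single j 1)) :=
    Set.disjoint_left.2 fun _ ⟨_, _, hxa⟩ ⟨_, _, hxa'⟩ => by
      simpa using (hxa' j hj).symm.trans (hxa j hj)
  have d3 : ∀ b, Disjoint (subcubeCrossings P T b)
      {x ∈ subcubeCrossings P (insert j T) a | x.2 = j} :=
    fun b => Set.disjoint_left.2 fun _ ⟨_, hxT, _⟩ ⟨_, hxj⟩ => hj (hxj ▸ hxT)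
  rw [← Set.ncard_union_eq d12, ← Set.ncard_union_eq (Set.disjoint_union_left.2 ⟨d3 a, d3 _⟩)]
  exact Set.ncard_le_ncard (Set.union_subset (Set.union_subset
    (hsub a (subcube_subset_insert j a)) (hsub _ (subcube_add_single_subset_insert j a)))
    (Set.sep_subset _ _))

theorem one_le_ncard_subcubeCrossings_dir {j : ι} {T : Finset ι} {a x : ι → ZMod 2}
    (hx : x ∈ subcube (insert j T) a) (hxP : x ∈ P) (hxP' : x + Pi.single j 1 ∉ P) :
    1 ≤ {x ∈ subcubeCrossings P (insert j T) a | x.2 = j}.ncard :=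
  (Set.ncard_pos (Set.toFinite _)).2 ⟨(x, j), ⟨⟨hxP, hxP'⟩, Finset.mem_insert_self _ _, hx⟩, rfl⟩

theorem card_lt_ncard_subcubeCrossings_dir {j : ι} {T : Finset ι} {a : ι → ZMod 2}
    (h : subcube T a ⊆ P) (h' : subcube T (a + Pi.single j 1) ⊆ Pᶜ) :
    T.card < {x ∈ subcubeCrossings P (insert j T) a | x.2 = j}.ncard := by
  have hmem : ∀ {x}, x ∈ subcube T a →
      (x, j) ∈ {x ∈ subcubeCrossings P (insert j T) a | x.2 = j} := fun {x} hx =>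
    ⟨⟨⟨h hx, h' (add_single_mem_subcube j hx)⟩, Finset.mem_insert_self _ _,
      subcube_subset_insert j a hx⟩, rfl⟩
  have hsub : insert (a, j) ((fun k => (a + Pi.single k 1, j)) '' T) ⊆
      {x ∈ subcubeCrossings P (insert j T) a | x.2 = j} := by
    rintro _ (rfl | ⟨k, hk, rfl⟩)
    · exact hmem fun _ _ => rfl
    · exact hmem fun i hi => by simp [show i ≠ k from fun h => hi (h ▸ hk)]
  have hnot : (a, j) ∉ (fun k => (a + Pi.single k 1, j)) '' T := fun ⟨k, _, hk⟩ =>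
    add_single_ne a k (congrArg Prod.fst hk)
  have hinj : Function.Injective fun k => (a + Pi.single k 1, j) := fun k k' h => by
    simpa [Pi.single_apply] using congrFun (add_left_cancel (congrArg Prod.fst h)) k
  have := Set.ncard_le_ncard hsub
  rwa [Set.ncard_insert_of_notMem hnot, Set.ncard_image_of_injective _ hinj,
    Set.ncard_coe_finset, Nat.add_one_le_iff] at this

/-- Split the subcube along `j`: a half that meets both `P` and `Pᶜ` contributes `|T|` crossings
by induction, and the one still missing, or all `|T| + 1` when the halves are `P` and `Pᶜ`,
lie in direction `j`. -/
theorem card_le_ncard_subcubeCrossings (T : Finset ι) {a b : ι → ZMod 2}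
    (hb : b ∈ subcube T a) (ha : a ∈ P) (hbP : b ∉ P) :
    T.card ≤ (subcubeCrossings P T a).ncard := by
  induction T using Finset.induction_on generalizing a b with
  | empty => simp
  | insert j T hj ih =>
    have hsplit := ncard_subcubeCrossings_insert (P := P) hj a
    have hin := subcube_subset_insert j a (T := T)
    have hin' := subcube_add_single_subset_insert j a (T := T)
    set a' := a + Pi.single j 1
    rw [Finset.card_insert_of_notMem hj]
    by_cases h0 : subcube T a ⊆ P
    · have hb' : b ∈ subcube T a' := mem_subcube_add_single hb fun h => hbP (h0 h)
      by_cases h1 : subcube T a' ⊆ Pᶜ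
      · have := card_lt_ncard_subcubeCrossings_dir h0 h1
        omega
      obtain ⟨z, hz, hzP⟩ := Set.not_subset.1 h1
      have := ih (subcube_eq hz ▸ hb') (not_not.1 hzP) hbP
      rw [subcubeCrossings_eq hz] at this
      have hb'' : b + Pi.single j 1 ∈ subcube T a := by
        simpa [a', add_single_add_single] using add_single_mem_subcube j hb'
      have := one_le_ncard_subcubeCrossings_dir (hin hb'') (h0 hb'')
        (by rwa [add_single_add_single])
      omega
    obtain ⟨x, hx, hxP⟩ := Set.not_subset.1 h0
    have := ih hx ha hxP
    by_cases ha' : a' ∉ P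
    · have := one_le_ncard_subcubeCrossings_dir (hin fun _ _ => rfl) ha ha'
      omega
    by_cases h1 : subcube T a' ⊆ P
    · have := one_le_ncard_subcubeCrossings_dir (hin' (add_single_mem_subcube j hx))
        (h1 (add_single_mem_subcube j hx)) (by rwa [add_single_add_single])
      omega
    obtain ⟨y, hy, hyP⟩ := Set.not_subset.1 h1
    have := ih hy (not_not.1 ha') hyP
    have := card_pos_of_mem_subcube hy (fun _ _ => rfl) fun h => hyP (h ▸ not_not.1 ha')
    omega

theorem card_le_ncard_cubeCrossings (hP : P.Nonempty) (hP' : Pᶜ.Nonempty) :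
    Nat.card ι ≤ (cubeCrossings P).ncard := by
  have := Fintype.ofFinite ι
  obtain ⟨a, ha⟩ := hP
  obtain ⟨b, hb⟩ := hP'
  have := card_le_ncard_subcubeCrossings Finset.univ (by simp [subcube]) ha hb
  rw [Finset.card_univ, ← Nat.card_eq_fintype_card] at this
  exact this.trans (Set.ncard_le_ncard fun x hx => hx.1)

end Hypercube

section Circulant

variable {B : Type*} [AddCommGroup B] {SB : Set B}

theorem circulantGraph_adj_iff_sub_mem (h0 : (0 : B) ∉ SB) (hsymm : ∀ z ∈ SB, -z ∈ SB)
    {u v : B} : (circulantGraph SB).Adj u v ↔ v - u ∈ SB := by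
  rw [circulantGraph_adj]
  exact ⟨fun ⟨_, h⟩ => h.elim (fun h => by simpa using hsymm _ h) id,
    fun h => ⟨fun huv => h0 (by simpa [huv] using h), .inr h⟩⟩

theorem exists_circulantGraph_adj (h0 : (0 : B) ∉ SB) (hSB : SB.Nonempty) (u : B) :
    ∃ v, (circulantGraph SB).Adj u v := by
  obtain ⟨s, hs⟩ := hSB
  refine ⟨u + s, fun h => h0 ?_, .inr (by simpa using hs)⟩
  rwa [left_eq_add.1 h] at hs

theorem ncard_neighborSet_circulantGraph (h0 : (0 : B) ∉ SB) (hsymm : ∀ z ∈ SB, -z ∈ SB)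
    (u : B) : ((circulantGraph SB).neighborSet u).ncard = SB.ncard := by
  have : (circulantGraph SB).neighborSet u = (u + ·) '' SB := by
    ext v
    rw [mem_neighborSet, circulantGraph_adj_iff_sub_mem h0 hsymm]
    exact ⟨fun h => ⟨v - u, h, add_sub_cancel u v⟩, by rintro ⟨s, hs, rfl⟩; simpa using hs⟩
  rw [this, Set.ncard_image_of_injective _ (add_right_injective u)]

theorem ncard_levelPairs {α : Type*} (X : Set (α × B)) (a : α) :
    (Prod.map (Prod.mk a) (Prod.mk a) ''
      (circulantGraph SB).crossingPairs (Prod.mk a ⁻¹' X)).ncard =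
      ((circulantGraph SB).crossingPairs (Prod.mk a ⁻¹' X)).ncard :=
  Set.ncard_image_of_injective _
    ((Prod.mk_right_injective (β := B) a).prodMap (Prod.mk_right_injective (β := B) a))

end Circulant

section CubeConnectedCirculant

variable {B : Type*} [DecidableEq B]

def cubeFlip (p : (B → ZMod 2) × B) : (B → ZMod 2) × B :=
  (p.1 + Pi.single p.2 1, p.2)

theorem cubeFlip_cubeFlip (p : (B → ZMod 2) × B) : cubeFlip (cubeFlip p) = p :=
  Prod.ext (add_single_add_single p.1 p.2) rfl

theorem cubeFlip_fst_ne (p : (B → ZMod 2) × B) : (cubeFlip p).1 ≠ p.1 :=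
  add_single_ne p.1 p.2

variable [AddCommGroup B] {SB : Set B}

def cubeConnectedCirculant (SB : Set B) : SimpleGraph ((B → ZMod 2) × B) where
  Adj p q := (p.1 = q.1 ∧ (circulantGraph SB).Adj p.2 q.2) ∨ q = cubeFlip p
  symm := by
    constructor
    rintro p q (⟨h1, h2⟩ | rfl)
    · exact .inl ⟨h1.symm, h2.symm⟩
    · exact .inr (cubeFlip_cubeFlip p).symm
  loopless := by
    constructor
    rintro p (⟨-, h⟩ | h)
    · exact (circulantGraph SB).loopless.irrefl _ h
    · exact cubeFlip_fst_ne p (congrArg Prod.fst h).symm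

theorem cubeConnectedCirculant_adj {p q : (B → ZMod 2) × B} :
    (cubeConnectedCirculant SB).Adj p q ↔
      (p.1 = q.1 ∧ (circulantGraph SB).Adj p.2 q.2) ∨ q = cubeFlip p :=
  Iff.rfl

theorem cubeConnectedCirculant_adj_iff_exists {p q : (B → ZMod 2) × B} :
    (cubeConnectedCirculant SB).Adj p q ↔ p ≠ q ∧
      (((∃ z ∈ SB, q = (p.1, p.2 + z)) ∨ q = cubeFlip p) ∨
        ((∃ z ∈ SB, p = (q.1, q.2 + z)) ∨ p = cubeFlip q)) := by
  have step : ∀ {p q : (B → ZMod 2) × B}, p ≠ q →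
      ((∃ z ∈ SB, q = (p.1, p.2 + z)) ∨ q = cubeFlip p) →
        (cubeConnectedCirculant SB).Adj p q := by
    rintro p q hne (⟨z, hz, rfl⟩ | rfl)
    · exact .inl ⟨rfl, fun h => hne (Prod.ext rfl h), .inr (by simpa using hz)⟩
    · exact .inr rfl
  refine ⟨fun h => ⟨h.ne, ?_⟩, fun ⟨hne, h⟩ => h.elim (step hne) fun h => (step hne.symm h).symm⟩
  rcases h with ⟨h1, h2⟩ | h
  · rcases h2.2 with h3 | h3
    · exact .inr (.inl ⟨_, h3, Prod.ext h1 (add_sub_cancel _ _).symm⟩)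
    · exact .inl (.inl ⟨_, h3, Prod.ext h1.symm (add_sub_cancel _ _).symm⟩)
  · exact .inl (.inr h)

theorem ncard_neighborSet_cubeConnectedCirculant [Finite B] (h0 : (0 : B) ∉ SB)
    (hsymm : ∀ z ∈ SB, -z ∈ SB) (p : (B → ZMod 2) × B) :
    ((cubeConnectedCirculant SB).neighborSet p).ncard = SB.ncard + 1 := by
  have : (cubeConnectedCirculant SB).neighborSet p =
      Prod.mk p.1 '' (circulantGraph SB).neighborSet p.2 ∪ {cubeFlip p} := by
    ext ⟨a, i⟩
    simp only [mem_neighborSet, cubeConnectedCirculant_adj, Set.mem_union, Set.mem_image,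
      Prod.mk.injEq, Set.mem_singleton_iff]
    constructor
    · rintro (⟨rfl, h⟩ | h)
      exacts [.inl ⟨i, h, rfl, rfl⟩, .inr h]
    · rintro (⟨i, h, rfl, rfl⟩ | h)
      exacts [.inl ⟨rfl, h⟩, .inr h]
  rw [this, Set.ncard_union_eq, Set.ncard_image_of_injective _ (Prod.mk_right_injective _),
    ncard_neighborSet_circulantGraph h0 hsymm, Set.ncard_singleton]
  rw [Set.disjoint_singleton_right]
  rintro ⟨i, -, h⟩
  exact cubeFlip_fst_ne p (congrArg Prod.fst h).symm

theorem ncard_crossingPairs_preimage_fst (P : Set (B → ZMod 2)) :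
    ((cubeConnectedCirculant SB).crossingPairs (Prod.fst ⁻¹' P)).ncard =
      (cubeCrossings P).ncard := by
  have : (cubeConnectedCirculant SB).crossingPairs (Prod.fst ⁻¹' P) =
      (fun x => (x, cubeFlip x)) '' cubeCrossings P := by
    ext ⟨x, y⟩
    constructor
    · rintro ⟨hx, hy, ⟨hxy, -⟩ | h⟩
      · exact absurd (show y.1 ∈ P from hxy ▸ hx) hy
      · obtain rfl : y = cubeFlip x := h
        exact ⟨x, ⟨hx, hy⟩, rfl⟩
    · rintro ⟨x, ⟨hx, hy⟩, h⟩
      obtain ⟨rfl, rfl⟩ := Prod.mk.inj h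
      exact ⟨hx, hy, .inr rfl⟩
  rw [this, Set.ncard_image_of_injective _ fun x y h => congrArg Prod.fst h]

theorem levelPairs_subset_crossingPairs (X : Set ((B → ZMod 2) × B)) (a : B → ZMod 2) :
    Prod.map (Prod.mk a) (Prod.mk a) '' (circulantGraph SB).crossingPairs (Prod.mk a ⁻¹' X) ⊆
      (cubeConnectedCirculant SB).crossingPairs X := by
  rintro _ ⟨⟨i, j⟩, ⟨hi, hj, hij⟩, rfl⟩
  exact ⟨hi, hj, .inl ⟨rfl, hij⟩⟩

variable [Finite B]

theorem ncard_crossingPairs_level_add_level (X : Set ((B → ZMod 2) × B)) {a a' : B → ZMod 2}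
    (haa' : a ≠ a') :
    ((circulantGraph SB).crossingPairs (Prod.mk a ⁻¹' X)).ncard +
      ((circulantGraph SB).crossingPairs (Prod.mk a' ⁻¹' X)).ncard ≤
      ((cubeConnectedCirculant SB).crossingPairs X).ncard := by
  have hdisj : Disjoint (Prod.map (Prod.mk a) (Prod.mk a) ''
      (circulantGraph SB).crossingPairs (Prod.mk a ⁻¹' X))
      (Prod.map (Prod.mk a') (Prod.mk a') ''
      (circulantGraph SB).crossingPairs (Prod.mk a' ⁻¹' X)) := by
    rw [Set.disjoint_left]
    rintro _ ⟨⟨i, j⟩, -, rfl⟩ ⟨⟨i', j'⟩, -, h⟩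
    exact haa' (congrArg (·.1.1) h).symm
  rw [← ncard_levelPairs, ← ncard_levelPairs, ← Set.ncard_union_eq hdisj]
  exact Set.ncard_le_ncard (Set.union_subset (levelPairs_subset_crossingPairs X a)
    (levelPairs_subset_crossingPairs X a'))

theorem ncard_crossingPairs_level_add_flip (X : Set ((B → ZMod 2) × B)) (a : B → ZMod 2) :
    ((circulantGraph SB).crossingPairs (Prod.mk a ⁻¹' X)).ncard +
      {x ∈ X | cubeFlip x ∉ X}.ncard ≤ ((cubeConnectedCirculant SB).crossingPairs X).ncard := by
  have hflip : (fun x => (x, cubeFlip x)) '' {x ∈ X | cubeFlip x ∉ X} ⊆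
      (cubeConnectedCirculant SB).crossingPairs X := by
    rintro _ ⟨x, ⟨hx, hx'⟩, rfl⟩
    exact ⟨hx, hx', .inr rfl⟩
  have hdisj : Disjoint (Prod.map (Prod.mk a) (Prod.mk a) ''
      (circulantGraph SB).crossingPairs (Prod.mk a ⁻¹' X))
      ((fun x => (x, cubeFlip x)) '' {x ∈ X | cubeFlip x ∉ X}) := by
    rw [Set.disjoint_left]
    rintro _ ⟨⟨i, j⟩, -, rfl⟩ ⟨x, -, h⟩
    obtain ⟨rfl, h⟩ := Prod.mk.inj h
    have h1 := congrArg Prod.fst h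
    exact cubeFlip_fst_ne (a, i) h1
  rw [← ncard_levelPairs, ← Set.ncard_image_of_injective _ (f := fun x => (x, cubeFlip x))
      fun x y h => congrArg Prod.fst h, ← Set.ncard_union_eq hdisj]
  exact Set.ncard_le_ncard (Set.union_subset (levelPairs_subset_crossingPairs X a) hflip)

end CubeConnectedCirculant

section Clouds

variable {B : Type*} {SB : Set B}

def fullClouds (X : Set ((B → ZMod 2) × B)) : Set (B → ZMod 2) :=
  {a | ∀ i, (a, i) ∈ X}

theorem preimage_mk_nonempty {X : Set ((B → ZMod 2) × B)} {a : B → ZMod 2}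
    (h : a ∉ fullClouds Xᶜ) : (Prod.mk a ⁻¹' X).Nonempty := by
  simpa [fullClouds, Set.Nonempty] using h

theorem eq_preimage_fullClouds {X : Set ((B → ZMod 2) × B)}
    (h : ∀ b, b ∈ fullClouds X ∨ b ∈ fullClouds Xᶜ) : X = Prod.fst ⁻¹' fullClouds X := by
  ext ⟨b, i⟩
  exact ⟨fun hx => (h b).resolve_right fun hb => hb i hx, fun hb => hb i⟩

theorem ncard_preimage_fst_singleton (a : B → ZMod 2) :
    (Prod.fst ⁻¹' {a} : Set ((B → ZMod 2) × B)).ncard = Nat.card B := by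
  rw [← Set.prod_univ, Set.ncard_prod, Set.ncard_singleton, Set.ncard_univ, one_mul]

variable [AddCommGroup B] [Finite B]

theorem ncard_setOf_add_single_mem_fullClouds_add_compl [DecidableEq B]
    {X : Set ((B → ZMod 2) × B)} {a : B → ZMod 2}
    (h : ∀ b ≠ a, b ∈ fullClouds X ∨ b ∈ fullClouds Xᶜ) :
    {j | a + Pi.single j 1 ∈ fullClouds X}.ncard +
      {j | a + Pi.single j 1 ∈ fullClouds Xᶜ}.ncard = Nat.card B := by
  have : {j | a + Pi.single j 1 ∈ fullClouds Xᶜ} = {j | a + Pi.single j 1 ∈ fullClouds X}ᶜ := by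
    ext j
    have hnot : ¬(a + Pi.single j 1 ∈ fullClouds X ∧ a + Pi.single j 1 ∈ fullClouds Xᶜ) :=
      fun ⟨h, h'⟩ => h' 0 (h 0)
    have := h _ (add_single_ne a j)
    simp only [Set.mem_ofPred_eq, Set.mem_compl_iff]
    tauto
  rw [this, Set.ncard_add_ncard_compl]

variable (h0 : (0 : B) ∉ SB) (hsymm : ∀ z ∈ SB, -z ∈ SB) (hdense : Nat.card B < 2 * SB.ncard)
include h0 hsymm hdense

theorem ncard_le_ncard_crossingPairs_levels {X : Set ((B → ZMod 2) × B)} {a : B → ZMod 2}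
    (ha : a ∉ fullClouds X) (ha' : a ∉ fullClouds Xᶜ) :
    SB.ncard ≤ ((circulantGraph SB).crossingPairs (Prod.mk a ⁻¹' X)).ncard :=
  le_ncard_crossingPairs_of_dense (fun u => (ncard_neighborSet_circulantGraph h0 hsymm u).ge)
    hdense (preimage_mk_nonempty ha') (preimage_mk_nonempty (X := Xᶜ) (by rwa [compl_compl]))

variable [DecidableEq B]

theorem lt_ncard_crossingPairs_of_two_split {X : Set ((B → ZMod 2) × B)} {a a' : B → ZMod 2}
    (haa' : a ≠ a') (ha : a ∉ fullClouds X) (ha' : a ∉ fullClouds Xᶜ)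
    (hb : a' ∉ fullClouds X) (hb' : a' ∉ fullClouds Xᶜ) :
    Nat.card B < ((cubeConnectedCirculant SB).crossingPairs X).ncard := by
  have := ncard_le_ncard_crossingPairs_levels h0 hsymm hdense ha ha'
  have := ncard_le_ncard_crossingPairs_levels h0 hsymm hdense hb hb'
  have := ncard_crossingPairs_level_add_level (SB := SB) X haa'
  omega

/-- The hypercube cut around the full clouds has at least `n` edges; at most
`#{j | a + e_j is full}` of them end in the split cloud `a`, and the others leave `X`. -/
theorem add_card_le_ncard_crossingPairs_add {X : Set ((B → ZMod 2) × B)} {a : B → ZMod 2}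
    (ha : a ∉ fullClouds X) (ha' : a ∉ fullClouds Xᶜ)
    (hunsplit : ∀ b ≠ a, b ∈ fullClouds X ∨ b ∈ fullClouds Xᶜ)
    (hfull : (fullClouds X).Nonempty) :
    SB.ncard + Nat.card B ≤ ((cubeConnectedCirculant SB).crossingPairs X).ncard +
      {j | a + Pi.single j 1 ∈ fullClouds X}.ncard := by
  have hsub : cubeCrossings (fullClouds X) ⊆
      (fun j => (a + Pi.single j 1, j)) '' {j | a + Pi.single j 1 ∈ fullClouds X} ∪
        {x ∈ X | cubeFlip x ∉ X} := by
    rintro ⟨b, j⟩ ⟨hb, hb'⟩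
    by_cases hba : b + Pi.single j 1 = a
    · obtain rfl : b = a + Pi.single j 1 := by rw [← hba, add_single_add_single]
      exact .inl ⟨j, hb, rfl⟩
    · exact .inr ⟨hb j, ((hunsplit _ hba).resolve_left hb') j⟩
  have := card_le_ncard_cubeCrossings hfull ⟨a, ha⟩
  have := (Set.ncard_le_ncard hsub).trans (Set.ncard_union_le _ _)
  have := Set.ncard_image_le (f := fun j => (a + Pi.single j 1, j))
    (s := {j | a + Pi.single j 1 ∈ fullClouds X})
  have := ncard_le_ncard_crossingPairs_levels h0 hsymm hdense ha ha'
  have := ncard_crossingPairs_level_add_flip (SB := SB) X a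
  omega

theorem lt_ncard_crossingPairs_of_compl_subset_cloud {X : Set ((B → ZMod 2) × B)}
    {a : B → ZMod 2} (hX : (cubeConnectedCirculant SB).IsRestrictedPart X)
    (ha : a ∉ fullClouds X) (ha' : a ∉ fullClouds Xᶜ) (hfull : ∀ b ≠ a, b ∈ fullClouds X) :
    Nat.card B < ((cubeConnectedCirculant SB).crossingPairs X).ncard := by
  have hY : 2 ≤ (Prod.mk a ⁻¹' X)ᶜ.ncard := by
    obtain ⟨i, hi⟩ : ∃ i, (a, i) ∉ X := by simpa [fullClouds] using ha
    obtain ⟨w, hw, hwX⟩ := hX (a, i)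
    have hwX' : w ∉ X := fun h => hi (hwX.1 h)
    have hwa : w.1 = a := by
      by_contra h
      exact hwX' (hfull _ h w.2)
    rcases hw with ⟨-, hiw⟩ | rfl
    · refine (Set.ncard_pair hiw.ne).ge.trans (Set.ncard_le_ncard ?_)
      rintro _ (rfl | rfl)
      exacts [hi, by rwa [← hwa]]
    · exact absurd hwa (cubeFlip_fst_ne _)
  have hflip : (Prod.mk a ⁻¹' X)ᶜ.ncard ≤ {x ∈ X | cubeFlip x ∉ X}.ncard := by
    rw [← Set.ncard_image_of_injective _ (f := fun i => cubeFlip (a, i))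
      fun i j h => congrArg Prod.snd h]
    refine Set.ncard_le_ncard ?_
    rintro _ ⟨i, hi, rfl⟩
    exact ⟨hfull _ (cubeFlip_fst_ne (a, i)) i, by rwa [cubeFlip_cubeFlip]⟩
  have := two_mul_le_ncard_crossingPairs_add_of_dense
    (fun u => (ncard_neighborSet_circulantGraph h0 hsymm u).ge) hdense hY
    (by rw [compl_compl]; exact preimage_mk_nonempty ha')
  rw [ncard_crossingPairs_compl] at this
  have := ncard_crossingPairs_level_add_flip (SB := SB) X a
  omega

theorem lt_ncard_crossingPairs_of_split {X : Set ((B → ZMod 2) × B)}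
    (hX : (cubeConnectedCirculant SB).IsRestrictedPart X) {a : B → ZMod 2}
    (ha : a ∉ fullClouds X) (ha' : a ∉ fullClouds Xᶜ) :
    Nat.card B < ((cubeConnectedCirculant SB).crossingPairs X).ncard := by
  by_cases htwo : ∃ b ≠ a, b ∉ fullClouds X ∧ b ∉ fullClouds Xᶜ
  · obtain ⟨b, hba, hb, hb'⟩ := htwo
    exact lt_ncard_crossingPairs_of_two_split h0 hsymm hdense hba.symm ha ha' hb hb'
  have hunsplit : ∀ b ≠ a, b ∈ fullClouds X ∨ b ∈ fullClouds Xᶜ := fun b hb => by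
    by_contra h
    push Not at h
    exact htwo ⟨b, hb, h⟩
  have hunsplit' : ∀ b ≠ a, b ∈ fullClouds Xᶜ ∨ b ∈ fullClouds Xᶜᶜ := fun b hb => by
    rw [compl_compl]
    exact (hunsplit b hb).symm
  by_cases hE : ∀ b ≠ a, b ∈ fullClouds X
  · exact lt_ncard_crossingPairs_of_compl_subset_cloud h0 hsymm hdense hX ha ha' hE
  by_cases hF : ∀ b ≠ a, b ∈ fullClouds Xᶜ
  · rw [← ncard_crossingPairs_compl]
    exact lt_ncard_crossingPairs_of_compl_subset_cloud h0 hsymm hdense hX.compl ha'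
      (by rwa [compl_compl]) hF
  push Not at hE hF
  obtain ⟨e, hea, he⟩ := hE
  obtain ⟨f, hfa, hf⟩ := hF
  have h1 := add_card_le_ncard_crossingPairs_add h0 hsymm hdense ha ha' hunsplit
    ⟨f, (hunsplit f hfa).resolve_right hf⟩
  have h2 := add_card_le_ncard_crossingPairs_add h0 hsymm hdense ha' (by rwa [compl_compl])
    hunsplit' ⟨e, (hunsplit e hea).resolve_left he⟩
  rw [ncard_crossingPairs_compl] at h2
  have := ncard_setOf_add_single_mem_fullClouds_add_compl hunsplit
  omega

theorem card_le_ncard_crossingPairs {X : Set ((B → ZMod 2) × B)}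
    (hX : (cubeConnectedCirculant SB).IsRestrictedPart X) (hne : X.Nonempty)
    (hne' : Xᶜ.Nonempty) : Nat.card B ≤ ((cubeConnectedCirculant SB).crossingPairs X).ncard := by
  by_cases hsplit : ∃ a, a ∉ fullClouds X ∧ a ∉ fullClouds Xᶜ
  · obtain ⟨a, ha, ha'⟩ := hsplit
    exact (lt_ncard_crossingPairs_of_split h0 hsymm hdense hX ha ha').le
  push Not at hsplit
  have hX' := eq_preimage_fullClouds fun b => or_iff_not_imp_left.2 (hsplit b)
  rw [hX', ncard_crossingPairs_preimage_fst]
  obtain ⟨x, hx⟩ := hne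
  obtain ⟨y, hy⟩ := hne'
  rw [hX'] at hx hy
  exact card_le_ncard_cubeCrossings ⟨_, hx⟩ ⟨_, hy⟩

theorem exists_eq_preimage_singleton_of_ncard_le {X : Set ((B → ZMod 2) × B)}
    (hX : (cubeConnectedCirculant SB).IsRestrictedPart X) (hne : X.Nonempty)
    (hcross : ((cubeConnectedCirculant SB).crossingPairs X).ncard ≤ Nat.card B)
    (hcard : X.ncard ≤ Nat.card B) : ∃ a, X = Prod.fst ⁻¹' {a} := by
  have hX' := eq_preimage_fullClouds fun b => or_iff_not_imp_left.2 fun hb => by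
    by_contra hb'
    exact (lt_ncard_crossingPairs_of_split h0 hsymm hdense hX hb hb').not_ge hcross
  have hpos : 1 ≤ (fullClouds X).ncard := by
    obtain ⟨x, hx⟩ := hne
    rw [hX'] at hx
    exact (Set.ncard_pos (Set.toFinite _)).2 ⟨_, hx⟩
  rw [hX', ← Set.prod_univ, Set.ncard_prod, Set.ncard_univ] at hcard
  have : 0 < Nat.card B := Nat.card_pos
  obtain ⟨a, ha⟩ := Set.ncard_eq_one.1 (by nlinarith : (fullClouds X).ncard = 1)
  exact ⟨a, ha ▸ hX'⟩

end Clouds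

section CloudFragments

variable {B : Type*} [DecidableEq B] [AddCommGroup B] {SB : Set B}

def cloudIso (a : B → ZMod 2) :
    (cubeConnectedCirculant SB).induce (Prod.fst ⁻¹' {a}) ≃g circulantGraph SB where
  toFun p := p.1.2
  invFun i := ⟨(a, i), rfl⟩
  left_inv p := Subtype.ext (Prod.ext p.2.symm rfl)
  right_inv _ := rfl
  map_rel_iff' {p q} := by
    have hp : p.1.1 = a := p.2
    have hq : q.1.1 = a := q.2
    change _ ↔ (p.1.1 = q.1.1 ∧ _) ∨ q.1 = cubeFlip p.1
    refine ⟨fun h => .inl ⟨hp.trans hq.symm, h⟩, ?_⟩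
    rintro (⟨-, h⟩ | h)
    · exact h
    · exact (cubeFlip_fst_ne p.1 (by rw [← h, hq, hp])).elim

theorem isRestrictedPart_preimage_fst (h0 : (0 : B) ∉ SB) (hSB : SB.Nonempty)
    (P : Set (B → ZMod 2)) : (cubeConnectedCirculant SB).IsRestrictedPart (Prod.fst ⁻¹' P) :=
  fun p => by
    obtain ⟨i, hi⟩ := exists_circulantGraph_adj h0 hSB p.2
    exact ⟨(p.1, i), .inl ⟨rfl, hi⟩, Iff.rfl⟩

theorem isRestrictedPart_of_separated (h0 : (0 : B) ∉ SB) (hSB : SB.Nonempty)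
    {a : B → ZMod 2} {Z₁ Z₂ : Set ((B → ZMod 2) × B)} (hcover : (Prod.fst ⁻¹' {a})ᶜ ⊆ Z₁ ∪ Z₂)
    (hZ₁ : Z₁ ⊆ (Prod.fst ⁻¹' {a})ᶜ)
    (hsep : ∀ u ∈ Z₁, ∀ v ∈ Z₂, ¬(cubeConnectedCirculant SB).Adj u v) :
    (cubeConnectedCirculant SB).IsRestrictedPart Z₁ := fun v => by
  obtain ⟨i, hi⟩ := exists_circulantGraph_adj h0 hSB v.2
  have hvw : (cubeConnectedCirculant SB).Adj v (v.1, i) := .inl ⟨rfl, hi⟩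
  refine ⟨(v.1, i), hvw, fun hw => ?_, fun hv => ?_⟩ <;> by_contra h
  · have hC : (v.1, i) ∈ (Prod.fst ⁻¹' {a})ᶜ := hZ₁ hw
    exact hsep _ hw _ ((hcover (a := v) hC).resolve_left h) hvw.symm
  · have hC : v ∈ (Prod.fst ⁻¹' {a})ᶜ := hZ₁ hv
    exact hsep _ hv _ ((hcover (a := (v.1, i)) hC).resolve_left h) hvw

theorem ncard_crossingPairs_preimage_singleton (a : B → ZMod 2) :
    ((cubeConnectedCirculant SB).crossingPairs (Prod.fst ⁻¹' {a})).ncard = Nat.card B := by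
  have : cubeCrossings {a} = Prod.fst ⁻¹' {a} := by
    ext ⟨b, j⟩
    simp only [cubeCrossings, Set.mem_ofPred_eq, Set.mem_singleton_iff, Set.mem_preimage,
      and_iff_left_iff_imp]
    rintro rfl
    exact add_single_ne b j
  rw [ncard_crossingPairs_preimage_fst, this, ncard_preimage_fst_singleton]

variable [Finite B]

theorem ncard_crossingPairs_le_of_separated {a : B → ZMod 2} {Z₁ Z₂ : Set ((B → ZMod 2) × B)}
    (hcover : (Prod.fst ⁻¹' {a})ᶜ ⊆ Z₁ ∪ Z₂) (hZ₁ : Z₁ ⊆ (Prod.fst ⁻¹' {a})ᶜ)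
    (hsep : ∀ u ∈ Z₁, ∀ v ∈ Z₂, ¬(cubeConnectedCirculant SB).Adj u v) :
    ((cubeConnectedCirculant SB).crossingPairs Z₁).ncard ≤
      ((cubeConnectedCirculant SB).crossingPairs (Prod.fst ⁻¹' {a}) ∩ Prod.snd ⁻¹' Z₁).ncard := by
  rw [← Set.ncard_image_of_injective _ Prod.swap_injective]
  refine Set.ncard_le_ncard ?_
  rintro _ ⟨⟨u, v⟩, ⟨hu, hv, huv⟩, rfl⟩
  have hvC : v ∈ Prod.fst ⁻¹' {a} := by
    by_contra h
    exact hsep u hu v ((hcover h).resolve_left hv) huv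
  exact ⟨⟨hvC, hZ₁ hu, huv.symm⟩, hu⟩

variable (h0 : (0 : B) ∉ SB) (hsymm : ∀ z ∈ SB, -z ∈ SB) (hdense : Nat.card B < 2 * SB.ncard)
include h0 hsymm hdense

/-- If the rest of the graph fell apart into separated parts `Z` and `Z'`, each would be a
restricted part with at least `n` boundary edges, all of them ending in the cloud; but only `n`
edges leave the cloud. -/
theorem connected_induce_compl_preimage_singleton (a : B → ZMod 2) :
    ((cubeConnectedCirculant SB).induce (Prod.fst ⁻¹' {a})ᶜ).Connected := by
  have hSB : SB.Nonempty := Set.nonempty_of_ncard_ne_zero (by omega)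
  have hC : (Prod.fst ⁻¹' {a} : Set ((B → ZMod 2) × B)).Nonempty := ⟨(a, 0), rfl⟩
  refine connected_induce_of_forall_exists_adj ⟨(a + Pi.single 0 1, 0), add_single_ne a 0⟩
    fun Z hZ hne hne' => ?_
  by_contra! hsep
  set Z' := (Prod.fst ⁻¹' {a})ᶜ \ Z
  have hsep' : ∀ u ∈ Z', ∀ v ∈ Z, ¬(cubeConnectedCirculant SB).Adj u v :=
    fun u hu v hv huv => hsep v hv u hu huv.symm
  have hcover : (Prod.fst ⁻¹' {a})ᶜ ⊆ Z ∪ Z' := by rw [Set.union_sdiff_cancel hZ]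
  have hcover' : (Prod.fst ⁻¹' {a})ᶜ ⊆ Z' ∪ Z := Set.union_comm Z Z' ▸ hcover
  have h1 := card_le_ncard_crossingPairs h0 hsymm hdense
    (isRestrictedPart_of_separated h0 hSB hcover hZ hsep) hne
    (hC.mono (Set.subset_compl_comm.1 hZ))
  have h2 := card_le_ncard_crossingPairs h0 hsymm hdense
    (isRestrictedPart_of_separated h0 hSB hcover' Set.sdiff_subset hsep') hne'
    (hC.mono fun x hx h => h.1 hx)
  have h3 := ncard_crossingPairs_le_of_separated hcover hZ hsep
  have h4 := ncard_crossingPairs_le_of_separated hcover' Set.sdiff_subset hsep'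
  have h5 : ((cubeConnectedCirculant SB).crossingPairs (Prod.fst ⁻¹' {a}) ∩
      Prod.snd ⁻¹' Z').ncard ≤
      ((cubeConnectedCirculant SB).crossingPairs (Prod.fst ⁻¹' {a}) \ Prod.snd ⁻¹' Z).ncard :=
    Set.ncard_le_ncard fun q hq => ⟨hq.1, hq.2.2⟩
  have h6 := Set.ncard_inter_add_ncard_sdiff_eq_ncard
    ((cubeConnectedCirculant SB).crossingPairs (Prod.fst ⁻¹' {a})) (Prod.snd ⁻¹' Z)
  rw [ncard_crossingPairs_preimage_singleton] at h6
  have : 0 < Nat.card B := Nat.card_pos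
  omega

theorem restrictedEdgeConn_cubeConnectedCirculant :
    restrictedEdgeConn (cubeConnectedCirculant SB) = Nat.card B := by
  have hSB : SB.Nonempty := Set.nonempty_of_ncard_ne_zero (by omega)
  have hcut := isRestrictedEdgeCut_edgeBoundary (isRestrictedPart_preimage_fst h0 hSB {0})
    ⟨(0, 0), rfl⟩ ⟨(Pi.single 0 1, 0), by simp⟩
  have hcard : (edgeBoundary (cubeConnectedCirculant SB) (Prod.fst ⁻¹' {0})).ncard =
      Nat.card B := by
    rw [ncard_edgeBoundary, ncard_crossingPairs_preimage_singleton]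
  refine le_antisymm (Nat.sInf_le ⟨_, hcut, hcard⟩) (le_csInf ⟨_, _, hcut, hcard⟩ ?_)
  rintro _ ⟨F, hF, rfl⟩
  obtain ⟨X, hne, hne', hX, hXF⟩ := hF.exists_isRestrictedPart
  calc Nat.card B ≤ ((cubeConnectedCirculant SB).crossingPairs X).ncard :=
        card_le_ncard_crossingPairs h0 hsymm hdense hX hne hne'
    _ = (edgeBoundary _ X).ncard := (ncard_edgeBoundary X).symm
    _ ≤ F.ncard := Set.ncard_le_ncard hXF

theorem isLambdaPrimeFragment_preimage_singleton (a : B → ZMod 2) :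
    IsLambdaPrimeFragment (cubeConnectedCirculant SB) (Prod.fst ⁻¹' {a}) := by
  have hSB : SB.Nonempty := Set.nonempty_of_ncard_ne_zero (by omega)
  have hc : SB.ncard + 1 ≤ Nat.card B := by
    have := Set.ncard_le_ncard (t := ({0}ᶜ : Set B)) fun z hz hz0 => h0 (hz0 ▸ hz)
    have := Set.ncard_add_ncard_compl ({0} : Set B)
    rw [Set.ncard_singleton] at this
    omega
  have hcirc : (circulantGraph SB).Connected :=
    connected_of_dense (fun u => (ncard_neighborSet_circulantGraph h0 hsymm u).ge) hdense
  refine ⟨by rw [ncard_preimage_fst_singleton]; omega,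
    isRestrictedEdgeCut_edgeBoundary (isRestrictedPart_preimage_fst h0 hSB {a}) ⟨(a, 0), rfl⟩
      ⟨(a + Pi.single 0 1, 0), add_single_ne a 0⟩, ?_, (cloudIso a).connected_iff.2 hcirc,
    connected_induce_compl_preimage_singleton h0 hsymm hdense a⟩
  rw [ncard_edgeBoundary, ncard_crossingPairs_preimage_singleton,
    restrictedEdgeConn_cubeConnectedCirculant h0 hsymm hdense]

theorem IsLambdaPrimeAtom.eq_preimage_singleton {X : Set ((B → ZMod 2) × B)}
    (hX : IsLambdaPrimeAtom (cubeConnectedCirculant SB) X) : ∃ a, X = Prod.fst ⁻¹' {a} := by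
  obtain ⟨⟨h2, hcut, hcard, -⟩, hmin⟩ := hX
  have := hmin _ (isLambdaPrimeFragment_preimage_singleton h0 hsymm hdense 0)
  rw [ncard_preimage_fst_singleton] at this
  refine exists_eq_preimage_singleton_of_ncard_le h0 hsymm hdense hcut.isRestrictedPart
    (Set.nonempty_of_ncard_ne_zero (by omega)) ?_ this
  rw [← ncard_edgeBoundary, hcard, restrictedEdgeConn_cubeConnectedCirculant h0 hsymm hdense]

end CloudFragments

section Cayley

open Multiplicative

variable {n : ℕ} {φ : Multiplicative (ZMod n) →* MulAut (Multiplicative (ZMod n → ZMod 2))}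

local notation "Γ" => Multiplicative (ZMod n → ZMod 2) ⋊[φ] Multiplicative (ZMod n)

variable {SB : Set (ZMod n)}
  {S : Set (Multiplicative (ZMod n → ZMod 2) ⋊[φ] Multiplicative (ZMod n))}

/-- Shifting the string by one position makes the generator `(e_1, 0)` flip coordinate `i` at
level `i`. -/
def shiftedCoords : Γ ≃ (ZMod n → ZMod 2) × ZMod n where
  toFun p := (fun k => toAdd p.left (k + 1), toAdd p.right)
  invFun q := ⟨ofAdd fun k => q.1 (k - 1), ofAdd q.2⟩
  left_inv p := by ext <;> simp
  right_inv q := by ext <;> simp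

theorem shiftedCoords_mul_level (x : Γ) (z : ZMod n) :
    shiftedCoords (x * ⟨1, ofAdd z⟩) = ((shiftedCoords x).1, (shiftedCoords x).2 + z) := by
  simp [shiftedCoords]

variable (hφ : ∀ (i : Multiplicative (ZMod n)) (a : Multiplicative (ZMod n → ZMod 2))
  (j : ZMod n), toAdd (φ i a) j = toAdd a (j - toAdd i))
include hφ

theorem shiftedCoords_mul_flip (x : Γ) :
    shiftedCoords (x * ⟨ofAdd (eVec n 1), 1⟩) = cubeFlip (shiftedCoords x) := by
  ext k
  · simp [shiftedCoords, cubeFlip, hφ, eVec, Pi.single_apply, sub_eq_iff_eq_add,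
      add_comm (1 : ZMod n)]
  · simp [shiftedCoords, cubeFlip]

variable (hS : S = {p : Multiplicative (ZMod n → ZMod 2) ⋊[φ] Multiplicative (ZMod n) |
    ∃ z ∈ SB, p = ⟨1, ofAdd z⟩} ∪
  {(⟨ofAdd (eVec n 1), 1⟩ : Multiplicative (ZMod n → ZMod 2) ⋊[φ] Multiplicative (ZMod n))})
include hS

theorem inv_mul_mem_iff_shiftedCoords (x y : Γ) :
    x⁻¹ * y ∈ S ↔
      (∃ z ∈ SB, shiftedCoords y = ((shiftedCoords x).1, (shiftedCoords x).2 + z)) ∨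
        shiftedCoords y = cubeFlip (shiftedCoords x) := by
  simp only [hS, Set.mem_union, Set.mem_ofPred_eq, Set.mem_singleton_iff, inv_mul_eq_iff_eq_mul,
    ← shiftedCoords_mul_level, ← shiftedCoords_mul_flip hφ, Equiv.apply_eq_iff_eq]

def cayleyGraphIso : cayleyGraph S ≃g cubeConnectedCirculant SB where
  toEquiv := shiftedCoords
  map_rel_iff' {x y} := by
    rw [cubeConnectedCirculant_adj_iff_exists]
    simp only [cayleyGraph, inv_mul_mem_iff_shiftedCoords hφ hS, ne_eq,
      EmbeddingLike.apply_eq_iff_eq]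

end Cayley

section ConnectionSet

variable {n k : ℕ} {s : Fin k → ℕ} {SB : Set (ZMod n)}
  (hSB : SB = {z : ZMod n | ∃ i : Fin k, z = (s i : ZMod n) ∨ z = -(s i : ZMod n)})
include hSB

theorem zero_notMem_of_eq_setOf_natCast (hpos : ∀ i, 0 < s i) (hhalf : ∀ i, 2 * s i < n) :
    (0 : ZMod n) ∉ SB := by
  rw [hSB]
  rintro ⟨i, h | h⟩ <;>
  · have := Nat.le_of_dvd (hpos i) ((ZMod.natCast_eq_zero_iff _ _).1 (by simpa using h.symm))
    linarith [hhalf i]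

theorem neg_mem_of_eq_setOf_natCast : ∀ z ∈ SB, -z ∈ SB := by
  rw [hSB]
  rintro z ⟨i, rfl | rfl⟩
  exacts [⟨i, .inr rfl⟩, ⟨i, .inl (neg_neg _)⟩]

end ConnectionSet

theorem cayleyGraph_shift_semidirect_not_optimal_general
    (n k : ℕ) (s : Fin k → ℕ)
    (hpos : ∀ i, 0 < s i) (hhalf : ∀ i, 2 * s i < n)
    (SB : Set (ZMod n))
    (hSB : SB = {z : ZMod n | ∃ i : Fin k, z = (s i : ZMod n) ∨ z = -(s i : ZMod n)})
    (φ : Multiplicative (ZMod n) →* MulAut (Multiplicative (ZMod n → ZMod 2)))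
    (hφ : ∀ (i : Multiplicative (ZMod n)) (a : Multiplicative (ZMod n → ZMod 2))
      (j : ZMod n),
      Multiplicative.toAdd (φ i a) j = Multiplicative.toAdd a (j - Multiplicative.toAdd i))
    (S : Set ((Multiplicative (ZMod n → ZMod 2)) ⋊[φ] Multiplicative (ZMod n)))
    (hS : S = {p : (Multiplicative (ZMod n → ZMod 2)) ⋊[φ] Multiplicative (ZMod n) |
        ∃ z ∈ SB, p = ⟨1, Multiplicative.ofAdd z⟩} ∪
      {(⟨Multiplicative.ofAdd (eVec n 1), 1⟩ :
        (Multiplicative (ZMod n → ZMod 2)) ⋊[φ] Multiplicative (ZMod n))})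
    (hlow : n / 2 < SB.ncard) (hupp : SB.ncard < n - 1) :
    ¬LambdaPrimeOptimal (cayleyGraph S) ∧
    edgeConn (cayleyGraph S) < restrictedEdgeConn (cayleyGraph S) ∧
    restrictedEdgeConn (cayleyGraph S) = n ∧
    Nat.card ((Multiplicative (ZMod n → ZMod 2)) ⋊[φ] Multiplicative (ZMod n))
      = n * 2 ^ n ∧
    2 * n < n * 2 ^ n ∧
    ∀ X : Set ((Multiplicative (ZMod n → ZMod 2)) ⋊[φ] Multiplicative (ZMod n)),
      IsLambdaPrimeAtom (cayleyGraph S) X →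
      Nonempty ((cayleyGraph S).induce X ≃g SimpleGraph.circulantGraph SB) := by
  have hn : 3 ≤ n := by omega
  have : NeZero n := ⟨by omega⟩
  have h0 := zero_notMem_of_eq_setOf_natCast hSB hpos hhalf
  have hsymm := neg_mem_of_eq_setOf_natCast hSB
  have hdense : Nat.card (ZMod n) < 2 * SB.ncard := by rw [Nat.card_zmod]; omega
  let f := cayleyGraphIso hφ hS
  have hrestricted : restrictedEdgeConn (cayleyGraph S) = n := by
    rw [restrictedEdgeConn_congr f, restrictedEdgeConn_cubeConnectedCirculant h0 hsymm hdense,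
      Nat.card_zmod]
  have hdeg v : ((cayleyGraph S).neighborSet v).ncard = SB.ncard + 1 := by
    rw [← f.ncard_neighborSet, ncard_neighborSet_cubeConnectedCirculant h0 hsymm]
  have hadj : (cayleyGraph S).Adj (f.symm (0, 0)) (f.symm (cubeFlip (0, 0))) :=
    f.symm.map_adj_iff.2 (.inr rfl)
  refine ⟨?_, ?_, hrestricted, ?_, ?_, fun X hX => ?_⟩
  · rw [LambdaPrimeOptimal, hrestricted, minEdgeDegree_eq_of_forall_ncard_neighborSet_eq hdeg hadj]
    omega
  · have := edgeConn_le_ncard_neighborSet (cayleyGraph S) hadj.ne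
    rw [hdeg] at this
    omega
  · rw [Nat.card_congr shiftedCoords, Nat.card_prod, Nat.card_fun, Nat.card_zmod, Nat.card_zmod,
      mul_comm]
  · have : 2 ^ 3 ≤ 2 ^ n := Nat.pow_le_pow_right (by norm_num) hn
    nlinarith
  · obtain ⟨a, ha⟩ := (hX.image f).eq_preimage_singleton h0 hsymm hdense
    exact ⟨(f.induce (ha ▸ f.injective.injOn.bijOn_image)).trans (cloudIso a)⟩

/-- Theorem 5.9. Let `A = (Z_2)^n`, `B = Z_n`,
`S_B = ±{s_1, …, s_k} ⊆ Z_n` with `k ≥ 2` and `s_1 < … < s_k < n/2`, let `φ` be the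
cyclic-shift action of `B` on `A`, and let `G = C_{A ⋊[φ] B}(S)` where
`S = {(0, s) : s ∈ S_B} ∪ {(e_1, 0)}`. If `n/2 < |S_B| < n - 1`, then `G` is not
`λ'`-optimal, `λ(G) < λ'(G) = n < υ(G)/2` where `υ(G) = n·2^n` is the order of `G`, and
every `λ'`-atom of `G` induces a subgraph isomorphic to the circulant graph
`C_B(S_B)`. -/
theorem cayleyGraph_shift_semidirect_not_optimal
    (n k : ℕ) (hk : 2 ≤ k) (s : Fin k → ℕ)
    (hmono : StrictMono s) (hpos : ∀ i, 0 < s i) (hhalf : ∀ i, 2 * s i < n)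
    (SB : Set (ZMod n))
    (hSB : SB = {z : ZMod n | ∃ i : Fin k, z = (s i : ZMod n) ∨ z = -(s i : ZMod n)})
    (φ : Multiplicative (ZMod n) →* MulAut (Multiplicative (ZMod n → ZMod 2)))
    (hφ : ∀ (i : Multiplicative (ZMod n)) (a : Multiplicative (ZMod n → ZMod 2))
      (j : ZMod n),
      Multiplicative.toAdd (φ i a) j = Multiplicative.toAdd a (j - Multiplicative.toAdd i))
    (S : Set ((Multiplicative (ZMod n → ZMod 2)) ⋊[φ] Multiplicative (ZMod n)))
    (hS : S = {p : (Multiplicative (ZMod n → ZMod 2)) ⋊[φ] Multiplicative (ZMod n) |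
        ∃ z ∈ SB, p = ⟨1, Multiplicative.ofAdd z⟩} ∪
      {(⟨Multiplicative.ofAdd (eVec n 1), 1⟩ :
        (Multiplicative (ZMod n → ZMod 2)) ⋊[φ] Multiplicative (ZMod n))})
    (hlow : n / 2 < SB.ncard) (hupp : SB.ncard < n - 1) :
    ¬LambdaPrimeOptimal (cayleyGraph S) ∧
    edgeConn (cayleyGraph S) < restrictedEdgeConn (cayleyGraph S) ∧
    restrictedEdgeConn (cayleyGraph S) = n ∧
    Nat.card ((Multiplicative (ZMod n → ZMod 2)) ⋊[φ] Multiplicative (ZMod n))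
      = n * 2 ^ n ∧
    2 * n < n * 2 ^ n ∧
    ∀ X : Set ((Multiplicative (ZMod n → ZMod 2)) ⋊[φ] Multiplicative (ZMod n)),
      IsLambdaPrimeAtom (cayleyGraph S) X →
      Nonempty ((cayleyGraph S).induce X ≃g SimpleGraph.circulantGraph SB) :=
  cayleyGraph_shift_semidirect_not_optimal_general n k s hpos hhalf SB hSB φ hφ S hS hlow hupp
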